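/- (Corollary 2, classifier part.) Let E : 𝒳 → ℱ be an extractor satisfying H(Y|E(X)) = H(Y|X) and H(V|(E(X),π_E(X))) = H(V|π_E(X)), and let Φ(x) = (E(x), π_E(x)). Then the optimal classifier's output equals the posterior of V given the true label posterior: for every x ∈ 𝒳 and v ∈ 𝒱, Pr[Φ=Φ(x), V=v] / Pr[Φ=Φ(x)] = Pr[π=π(x), V=v] / Pr[π=π(x)], where π : 𝒳 → (𝒴 → ℝ) is the posterior map π(x)(y) = q_{XY}(x,y)/q_X(x). -/
import Mathlib


open scoped BigOperators

/-- Marginal of a joint pmf on the first coordinate: `q_X(x) = ∑ w q(x,w)`. -/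
noncomputable def margX {X W : Type*} [Fintype W] (q : X × W → ℝ) (x : X) : ℝ :=
  ∑ w, q (x, w)

open Classical in
/-- `Pr[f = a, W = w] = ∑_{x : f x = a} q(x,w)`. -/
noncomputable def jointPr {X W A : Type*} [Fintype X] (q : X × W → ℝ)
    (f : X → A) (a : A) (w : W) : ℝ :=
  ∑ x ∈ Finset.univ.filter (fun x => f x = a), q (x, w)

open Classical in
/-- `Pr[f = a] = ∑_{x : f x = a} q_X(x)`. -/
noncomputable def featPr {X W A : Type*} [Fintype X] [Fintype W] (q : X × W → ℝ)
    (f : X → A) (a : A) : ℝ :=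
  ∑ x ∈ Finset.univ.filter (fun x => f x = a), margX q x

open Classical in
/-- Conditional entropy `H(W | f(X))`, natural logarithm, with the convention that
summands with `Pr[f=a, W=w] = 0` contribute `0` (automatic since `-0 * log _ = 0`). -/
noncomputable def condEnt {X W A : Type*} [Fintype X] [Fintype W] (q : X × W → ℝ)
    (f : X → A) : ℝ :=
  ∑ a ∈ Finset.univ.image f, ∑ w,
    -(jointPr q f a w) * Real.log (jointPr q f a w / featPr q f a)

/-- `-log t` valued in `(-∞, ∞]`, with the convention `-log 0 = +∞`. -/
noncomputable def negLog (t : ℝ) : EReal := if t = 0 then ⊤ else ((-(Real.log t) : ℝ) : EReal)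

/-- Cross-entropy loss `∑_{x,w} q(x,w) · (-log P(Φ(x))(w))`, valued in `(-∞, ∞]`. -/
noncomputable def condLoss {X W G : Type*} [Fintype X] [Fintype W] (q : X × W → ℝ)
    (Φ : X → G) (P : G → W → ℝ) : EReal :=
  ∑ x, ∑ w, (q (x, w) : EReal) * negLog (P (Φ x) w)

/-- A conditional probability mass function on labels `W` with feature space `G`. -/
def IsCondPMF {G W : Type*} [Fintype W] (P : G → W → ℝ) : Prop :=
  (∀ g w, 0 ≤ P g w) ∧ ∀ g, ∑ w, P g w = 1

open Classical in
/-- The posterior predictor: `Pr[Φ=g, W=w]/Pr[Φ=g]` on features of positive probability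
in the image of `Φ`, and the uniform distribution on `W` otherwise. -/
noncomputable def posteriorPred {X W G : Type*} [Fintype X] [Fintype W] (q : X × W → ℝ)
    (Φ : X → G) (g : G) (w : W) : ℝ :=
  if g ∈ Set.range Φ ∧ 0 < featPr q Φ g then jointPr q Φ g w / featPr q Φ g
  else 1 / Fintype.card W

/-- The posterior map `π(x)(w) = q(x,w)/q_X(x)`. -/
noncomputable def postMap {X W : Type*} [Fintype W] (q : X × W → ℝ) (x : X) : W → ℝ :=
  fun w => q (x, w) / margX q x

/-- Two-variable marginal `q_{XY}` of a pmf on `X × Y × Z × V`. -/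
noncomputable def qXY {X Y Z V : Type*} [Fintype Z] [Fintype V]
    (q : X × Y × Z × V → ℝ) : X × Y → ℝ :=
  fun p => ∑ z, ∑ v, q (p.1, p.2, z, v)

/-- Two-variable marginal `q_{XZ}` of a pmf on `X × Y × Z × V`. -/
noncomputable def qXZ {X Y Z V : Type*} [Fintype Y] [Fintype V]
    (q : X × Y × Z × V → ℝ) : X × Z → ℝ :=
  fun p => ∑ y, ∑ v, q (p.1, y, p.2, v)

/-- Two-variable marginal `q_{XV}` of a pmf on `X × Y × Z × V`. -/
noncomputable def qXV {X Y Z V : Type*} [Fintype Y] [Fintype Z]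
    (q : X × Y × Z × V → ℝ) : X × V → ℝ :=
  fun p => ∑ y, ∑ z, q (p.1, y, z, p.2)

/-- The posterior feature of an extractor `E`:
`π_E(x)(y) = Pr[E = E(x), Y = y] / Pr[E = E(x)]`. -/
noncomputable def postFeat {X Y F : Type*} [Fintype X] [Fintype Y] (qxy : X × Y → ℝ)
    (E : X → F) (x : X) : Y → ℝ :=
  fun y => jointPr qxy E (E x) y / featPr qxy E (E x)

/-- The virtual value function
`𝒱(E) = H(Y|E(X)) - α·H(Z|(E(X),π_E(X))) - β·H(V|(E(X),π_E(X)))`. -/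
noncomputable def virtVal {X Y Z V F : Type*}
    [Fintype X] [Fintype Y] [Fintype Z] [Fintype V]
    (α β : ℝ) (q : X × Y × Z × V → ℝ) (E : X → F) : ℝ :=
  condEnt (qXY q) E
    - α * condEnt (qXZ q) (fun x => (E x, postFeat (qXY q) E x))
    - β * condEnt (qXV q) (fun x => (E x, postFeat (qXY q) E x))

section Aux
open Classical

variable {X W A B : Type*} [Fintype X] [Fintype W]

lemma jointPr_nonneg (q : X × W → ℝ) (hq0 : ∀ p, 0 ≤ q p) (f : X → A) (a : A) (w : W) :
    0 ≤ jointPr q f a w :=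
  Finset.sum_nonneg fun _ _ => hq0 _

lemma q_le_jointPr (q : X × W → ℝ) (hq0 : ∀ p, 0 ≤ q p) (f : X → A) (x : X) (w : W) :
    q (x, w) ≤ jointPr q f (f x) w :=
  Finset.single_le_sum (fun i _ => hq0 (i, w)) (by simp)

lemma featPr_pos (q : X × W → ℝ) (hp : ∀ x, 0 < margX q x) (f : X → A) (x : X) :
    0 < featPr q f (f x) :=
  Finset.sum_pos (fun i _ => hp i) ⟨x, by simp⟩

lemma featPr_eq_sum_jointPr (q : X × W → ℝ) (f : X → A) (a : A) :
    featPr q f a = ∑ w, jointPr q f a w := by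
  unfold featPr jointPr margX
  rw [Finset.sum_comm]

/-- Termwise bound for Gibbs. -/
lemma gibbs_term (aw bw : ℝ) (ha : 0 ≤ aw) (habs : 0 < aw → 0 < bw) (hb : 0 ≤ bw) :
    aw - bw ≤ aw * (Real.log aw - Real.log bw) := by
  rcases eq_or_lt_of_le ha with h0 | h0
  · simp [← h0]; linarith
  · have hbw := habs h0
    have hlog : Real.log (bw / aw) ≤ bw / aw - 1 := Real.log_le_sub_one_of_pos (by positivity)
    rw [Real.log_div (ne_of_gt hbw) (ne_of_gt h0)] at hlog
    have := mul_le_mul_of_nonneg_left hlog (le_of_lt h0)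
    have hne : aw ≠ 0 := ne_of_gt h0
    field_simp at this
    nlinarith

lemma gibbs_nonneg (a b : W → ℝ) (ha : ∀ w, 0 ≤ a w) (hb : ∀ w, 0 ≤ b w)
    (habs : ∀ w, 0 < a w → 0 < b w) (hsum : ∑ w, a w = ∑ w, b w) :
    0 ≤ ∑ w, a w * (Real.log (a w) - Real.log (b w)) := by
  have h := Finset.sum_le_sum (s := (Finset.univ : Finset W))
    (f := fun w => a w - b w) (g := fun w => a w * (Real.log (a w) - Real.log (b w)))
    (fun w _ => gibbs_term (a w) (b w) (ha w) (habs w) (hb w))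
  rw [Finset.sum_sub_distrib, hsum, sub_self] at h
  exact h

lemma gibbs_eq (a b : W → ℝ) (ha : ∀ w, 0 ≤ a w) (hb : ∀ w, 0 ≤ b w)
    (habs : ∀ w, 0 < a w → 0 < b w) (hsum : ∑ w, a w = ∑ w, b w)
    (hzero : ∑ w, a w * (Real.log (a w) - Real.log (b w)) = 0) :
    ∀ w, a w = b w := by
  have hterm : ∀ w ∈ (Finset.univ : Finset W),
      a w * (Real.log (a w) - Real.log (b w)) - (a w - b w) = 0 := by
    rw [← Finset.sum_eq_zero_iff_of_nonneg
      (fun w _ => sub_nonneg.mpr (gibbs_term (a w) (b w) (ha w) (habs w) (hb w)))]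
    rw [Finset.sum_sub_distrib, hzero, Finset.sum_sub_distrib, hsum]
    ring
  intro w
  have h := sub_eq_zero.mp (hterm w (Finset.mem_univ w))
  rcases eq_or_lt_of_le (ha w) with h0 | h0
  · -- a w = 0, so 0 = 0 - b w hence b w = 0
    rw [← h0] at h ⊢
    simp at h
    linarith
  · have hbw := habs w h0
    by_contra hne
    have hne' : b w / a w ≠ 1 := by
      intro hc
      apply hne
      field_simp at hc
      linarith
    have hlog : Real.log (b w / a w) < b w / a w - 1 :=
      Real.log_lt_sub_one_of_pos (by positivity) hne'
    rw [Real.log_div (ne_of_gt hbw) (ne_of_gt h0)] at hlog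
    have := mul_lt_mul_of_pos_left hlog h0
    have hane : a w ≠ 0 := ne_of_gt h0
    field_simp at this
    nlinarith

/-- Grouping: joint probability for the coarsening `h ∘ f`. -/
lemma jointPr_comp (q : X × W → ℝ) (f : X → A) (h : A → B) (b : B) (w : W) :
    jointPr q (h ∘ f) b w
      = ∑ a ∈ (Finset.univ.image f).filter (fun a => h a = b), jointPr q f a w := by
  classical
  unfold jointPr
  rw [← Finset.sum_fiberwise_of_maps_to
    (s := Finset.univ.filter (fun x => (h ∘ f) x = b))
    (t := (Finset.univ.image f).filter (fun a => h a = b)) (g := f)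
    (fun x hx => by
      simp only [Finset.mem_filter, Finset.mem_univ, true_and, Finset.mem_image] at hx ⊢
      exact ⟨⟨x, rfl⟩, hx⟩)
    (fun x => q (x, w))]
  apply Finset.sum_congr rfl
  intro a ha
  simp only [Finset.mem_filter, Finset.mem_image] at ha
  apply Finset.sum_congr _ (fun _ _ => rfl)
  ext x
  simp only [Finset.mem_filter, Finset.mem_univ, true_and, Function.comp_apply]
  constructor
  · rintro ⟨_, h2⟩; exact h2
  · intro h2; exact ⟨by rw [h2]; exact ha.2, h2⟩

lemma featPr_comp (q : X × W → ℝ) (f : X → A) (h : A → B) (b : B) :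
    featPr q (h ∘ f) b
      = ∑ a ∈ (Finset.univ.image f).filter (fun a => h a = b), featPr q f a := by
  rw [featPr_eq_sum_jointPr, Finset.sum_congr rfl (fun w _ => jointPr_comp q f h b w),
    Finset.sum_comm]
  exact Finset.sum_congr rfl fun a _ => (featPr_eq_sum_jointPr q f a).symm

/-- Rewrite `condEnt q (h ∘ f)` as a sum over the image of `f`. -/
lemma condEnt_comp (q : X × W → ℝ) (f : X → A) (h : A → B) :
    condEnt q (h ∘ f)
      = ∑ a ∈ Finset.univ.image f, ∑ w,
          -(jointPr q f a w) * Real.log (jointPr q (h ∘ f) (h a) w / featPr q (h ∘ f) (h a)) := by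
  classical
  unfold condEnt
  rw [← Finset.sum_fiberwise_of_maps_to (s := Finset.univ.image f)
    (t := Finset.univ.image (h ∘ f)) (g := h)
    (fun a ha => by
      simp only [Finset.mem_image] at ha ⊢
      obtain ⟨x, _, rfl⟩ := ha
      exact ⟨x, Finset.mem_univ x, rfl⟩)
    (fun a => ∑ w, -(jointPr q f a w) *
        Real.log (jointPr q (h ∘ f) (h a) w / featPr q (h ∘ f) (h a)))]
  apply Finset.sum_congr rfl
  intro b hb
  rw [Finset.sum_comm]
  apply Finset.sum_congr rfl
  intro w _
  have hterm : ∀ a ∈ (Finset.univ.image f).filter (fun a => h a = b),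
      -(jointPr q f a w) * Real.log (jointPr q (h ∘ f) (h a) w / featPr q (h ∘ f) (h a))
      = -(jointPr q f a w) * Real.log (jointPr q (h ∘ f) b w / featPr q (h ∘ f) b) := by
    intro a ha
    rw [(Finset.mem_filter.mp ha).2]
  rw [Finset.sum_congr rfl hterm, ← Finset.sum_mul, Finset.sum_neg_distrib,
    ← jointPr_comp q f h b w]

/-- Main lemma: equality of conditional entropies between `f` and a coarsening `h ∘ f`
forces the posteriors to agree. -/
lemma post_eq_of_condEnt_eq (q : X × W → ℝ) (hq0 : ∀ p, 0 ≤ q p)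
    (hp : ∀ x, 0 < margX q x) (f : X → A) (h : A → B)
    (heq : condEnt q f = condEnt q (h ∘ f)) :
    ∀ (x : X) (w : W),
      jointPr q f (f x) w * featPr q (h ∘ f) (h (f x))
        = jointPr q (h ∘ f) (h (f x)) w * featPr q f (f x) := by
  classical
  have hFpos : ∀ a ∈ Finset.univ.image f, 0 < featPr q f a := by
    intro a ha
    obtain ⟨x, _, rfl⟩ := Finset.mem_image.mp ha
    exact featPr_pos q hp f x
  have hF'pos : ∀ a ∈ Finset.univ.image f, 0 < featPr q (h ∘ f) (h a) := by
    intro a ha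
    obtain ⟨x, _, rfl⟩ := Finset.mem_image.mp ha
    exact featPr_pos q hp (h ∘ f) x
  have hJnn : ∀ a w, 0 ≤ jointPr q f a w := fun a w => jointPr_nonneg q hq0 f a w
  have hJ'nn : ∀ b w, 0 ≤ jointPr q (h ∘ f) b w := fun b w => jointPr_nonneg q hq0 (h ∘ f) b w
  have hJle : ∀ a ∈ Finset.univ.image f, ∀ w, jointPr q f a w ≤ jointPr q (h ∘ f) (h a) w := by
    intro a ha w
    rw [jointPr_comp q f h (h a) w]
    refine Finset.single_le_sum (fun i _ => hJnn i w) (Finset.mem_filter.mpr ⟨ha, rfl⟩)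
  -- the per-fiber Gibbs term
  have hG : ∀ a ∈ Finset.univ.image f,
      (∑ w, -(jointPr q f a w) * Real.log (jointPr q (h ∘ f) (h a) w / featPr q (h ∘ f) (h a)))
        - (∑ w, -(jointPr q f a w) * Real.log (jointPr q f a w / featPr q f a))
      = ∑ w, (jointPr q f a w) * (Real.log (jointPr q f a w)
          - Real.log (jointPr q (h ∘ f) (h a) w * (featPr q f a / featPr q (h ∘ f) (h a)))) := by
    intro a ha
    rw [← Finset.sum_sub_distrib]
    apply Finset.sum_congr rfl
    intro w _
    rcases eq_or_lt_of_le (hJnn a w) with h0 | h0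
    · rw [← h0]; ring
    · have hJ'pos : 0 < jointPr q (h ∘ f) (h a) w := lt_of_lt_of_le h0 (hJle a ha w)
      have hFa := hFpos a ha
      have hF'a := hF'pos a ha
      rw [Real.log_div (ne_of_gt h0) (ne_of_gt hFa),
          Real.log_div (ne_of_gt hJ'pos) (ne_of_gt hF'a),
          Real.log_mul (ne_of_gt hJ'pos) (by positivity),
          Real.log_div (ne_of_gt hFa) (ne_of_gt hF'a)]
      ring
  -- sum of Gibbs terms is zero
  have hsum0 : ∑ a ∈ Finset.univ.image f,
      (∑ w, (jointPr q f a w) * (Real.log (jointPr q f a w)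
          - Real.log (jointPr q (h ∘ f) (h a) w * (featPr q f a / featPr q (h ∘ f) (h a))))) = 0 := by
    rw [← Finset.sum_congr rfl hG, Finset.sum_sub_distrib]
    have h1 : ∑ a ∈ Finset.univ.image f,
        ∑ w, -(jointPr q f a w) * Real.log (jointPr q (h ∘ f) (h a) w / featPr q (h ∘ f) (h a)) = condEnt q (h ∘ f) :=
      (condEnt_comp q f h).symm
    have h2 : ∑ a ∈ Finset.univ.image f,
        ∑ w, -(jointPr q f a w) * Real.log (jointPr q f a w / featPr q f a) = condEnt q f := rfl
    rw [h1, h2, heq, sub_self]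
  -- hypotheses of Gibbs per fiber
  have hyp : ∀ a ∈ Finset.univ.image f, ∀ w, jointPr q f a w = jointPr q (h ∘ f) (h a) w * (featPr q f a / featPr q (h ∘ f) (h a)) := by
    have hnn : ∀ a ∈ Finset.univ.image f,
        0 ≤ ∑ w, (jointPr q f a w) * (Real.log (jointPr q f a w)
          - Real.log (jointPr q (h ∘ f) (h a) w * (featPr q f a / featPr q (h ∘ f) (h a)))) := by
      intro a ha
      apply gibbs_nonneg
      · exact fun w => hJnn a w
      · intro w
        have := hF'pos a ha
        have := hFpos a ha
        have := hJ'nn (h a) w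
        positivity
      · intro w hw
        have h1 : 0 < jointPr q (h ∘ f) (h a) w := lt_of_lt_of_le hw (hJle a ha w)
        have := hFpos a ha
        have := hF'pos a ha
        positivity
      · rw [← featPr_eq_sum_jointPr, ← Finset.sum_mul, ← featPr_eq_sum_jointPr]
        have := hF'pos a ha
        field_simp
    intro a ha
    have hz : ∑ w, (jointPr q f a w) * (Real.log (jointPr q f a w)
          - Real.log (jointPr q (h ∘ f) (h a) w * (featPr q f a / featPr q (h ∘ f) (h a)))) = 0 :=
      (Finset.sum_eq_zero_iff_of_nonneg hnn).mp hsum0 a ha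
    apply gibbs_eq
    · exact fun w => hJnn a w
    · intro w
      have := hF'pos a ha
      have := hFpos a ha
      have := hJ'nn (h a) w
      positivity
    · intro w hw
      have h1 : 0 < jointPr q (h ∘ f) (h a) w := lt_of_lt_of_le hw (hJle a ha w)
      have := hFpos a ha
      have := hF'pos a ha
      positivity
    · rw [← featPr_eq_sum_jointPr, ← Finset.sum_mul, ← featPr_eq_sum_jointPr]
      have := hF'pos a ha
      field_simp
    · exact hz
  intro x w
  have hmem : f x ∈ Finset.univ.image f := Finset.mem_image.mpr ⟨x, Finset.mem_univ x, rfl⟩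
  have := hyp (f x) hmem w
  have hF'p := hF'pos (f x) hmem
  rw [this]
  field_simp

end Aux

/-- Corollary 2, classifier part: if `H(Y|E(X)) = H(Y|X)` and
`H(V|(E(X),π_E(X))) = H(V|π_E(X))`, then with `Φ(x) = (E(x), π_E(x))`, for all `x, v`,
`Pr[Φ=Φ(x), V=v]/Pr[Φ=Φ(x)] = Pr[π=π(x), V=v]/Pr[π=π(x)]`, where `π` is the true
posterior map. -/

theorem statement13 {X Y Z V F : Type*}
    [Fintype X] [Nonempty X] [Fintype Y] [Nonempty Y]
    [Fintype Z] [Nonempty Z] [Fintype V] [Nonempty V]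
    (q : X × Y × Z × V → ℝ) (hq0 : ∀ p, 0 ≤ q p) (hq1 : ∑ p, q p = 1)
    (hqX : ∀ x, 0 < margX (qXY q) x) (E : X → F)
    (h1 : condEnt (qXY q) E = condEnt (qXY q) id)
    (h2 : condEnt (qXV q) (fun x => (E x, postFeat (qXY q) E x))
          = condEnt (qXV q) (postFeat (qXY q) E)) :
    ∀ (x : X) (v : V),
      jointPr (qXV q) (fun x => (E x, postFeat (qXY q) E x)) (E x, postFeat (qXY q) E x) v
        / featPr (qXV q) (fun x => (E x, postFeat (qXY q) E x)) (E x, postFeat (qXY q) E x)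
      = jointPr (qXV q) (postMap (qXY q)) (postMap (qXY q) x) v
        / featPr (qXV q) (postMap (qXY q)) (postMap (qXY q) x) := by
  classical
  have hq0Y : ∀ p : X × Y, 0 ≤ qXY q p := fun p =>
    Finset.sum_nonneg fun z _ => Finset.sum_nonneg fun v _ => hq0 _
  have hq0V : ∀ p : X × V, 0 ≤ qXV q p := fun p =>
    Finset.sum_nonneg fun y _ => Finset.sum_nonneg fun z _ => hq0 _
  have hmarg : ∀ x, margX (qXV q) x = margX (qXY q) x := by
    intro x
    unfold margX qXV qXY
    rw [Finset.sum_comm]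
    exact Finset.sum_congr rfl fun y _ => Finset.sum_comm
  have hppt : ∀ (x : X) (y : Y), postMap (qXY q) x y = postFeat (qXY q) E x y := by
    intro x y
    have key := post_eq_of_condEnt_eq (qXY q) hq0Y hqX id E h1.symm x y
    have hfilt : (Finset.univ.filter (fun x' => id x' = x)) = {x} := by
      ext x'; simp
    have hid1 : jointPr (qXY q) id x y = qXY q (x, y) := by
      unfold jointPr
      rw [hfilt, Finset.sum_singleton]
    have hid2 : featPr (qXY q) id x = margX (qXY q) x := by
      unfold featPr
      rw [hfilt, Finset.sum_singleton]
    unfold postMap postFeat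
    rw [div_eq_div_iff (ne_of_gt (hqX x)) (ne_of_gt (featPr_pos (qXY q) hqX E x))]
    rw [← hid1, ← hid2]
    exact key
  have hfun : (Prod.snd ∘ (fun x => (E x, postFeat (qXY q) E x)) : X → Y → ℝ)
      = postMap (qXY q) := by
    funext x' y'
    exact (hppt x' y').symm
  have hpV : ∀ x, 0 < margX (qXV q) x := fun x' => by rw [hmarg x']; exact hqX x'
  intro x v
  have key := post_eq_of_condEnt_eq (qXV q) hq0V hpV
      (fun x => (E x, postFeat (qXY q) E x)) Prod.snd h2 x v
  rw [← hfun]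
  rw [div_eq_div_iff
    (ne_of_gt (featPr_pos (qXV q) hpV (fun x => (E x, postFeat (qXY q) E x)) x))
    (ne_of_gt (featPr_pos (qXV q) hpV (Prod.snd ∘ (fun x => (E x, postFeat (qXY q) E x))) x))]
  exact key
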